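/- arXiv:1507.01146 — 6 statements merged into one kernel-verified Lean document; each statement's English description precedes it below -/
import Mathlib

section
/- The quadratic equation in σ obtained from requiring a triple root of p(s) = s² + as + (k_p s + k_i) b e^{-hs} at s = -σ has solutions σ = (4 + ah ± √(8 + a²h²))/(2h); in particular σ* = (4 + ah − √(8 + a²h²))/(2h) is a real positive number for all a ≥ 0, h > 0. -/
/-! The discriminant of `h²σ² − (4 + ah)hσ + 2(1 + ah)` is `h²(8 + a²h²)`, which gives the two
roots. The smaller root is positive because `√(8 + x²) < 4 + x` as soon as `x > -1`, since
`(4 + x)² − (8 + x²) = 8(1 + x)`. -/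

open Real

theorem discrim_tripleRoot_quadratic (a h : ℝ) :
    discrim (h ^ 2) (-((4 + a * h) * h)) (2 * (1 + a * h)) =
      (h * √(8 + a ^ 2 * h ^ 2)) * (h * √(8 + a ^ 2 * h ^ 2)) := by
  rw [discrim]
  linear_combination -h ^ 2 * mul_self_sqrt (by positivity : (0 : ℝ) ≤ 8 + a ^ 2 * h ^ 2)

theorem tripleRoot_quadratic_eq_zero_iff {a h : ℝ} (hh : h ≠ 0) (σ : ℝ) :
    h ^ 2 * σ ^ 2 - (4 + a * h) * h * σ + 2 * (1 + a * h) = 0 ↔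
      σ = (4 + a * h + √(8 + a ^ 2 * h ^ 2)) / (2 * h) ∨
        σ = (4 + a * h - √(8 + a ^ 2 * h ^ 2)) / (2 * h) := by
  have hroot (s : ℝ) :
      (-(-((4 + a * h) * h)) + h * s) / (2 * h ^ 2) = (4 + a * h + s) / (2 * h) := by
    field_simp
  have hroot' (s : ℝ) :
      (-(-((4 + a * h) * h)) - h * s) / (2 * h ^ 2) = (4 + a * h - s) / (2 * h) := by
    field_simp
  rw [← hroot, ← hroot', ← quadratic_eq_zero_iff (pow_ne_zero 2 hh)
    (discrim_tripleRoot_quadratic a h)]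
  ring_nf

theorem sqrt_eight_add_sq_lt {x : ℝ} (hx : -1 < x) : √(8 + x ^ 2) < 4 + x := by
  rw [sqrt_lt' (by linarith)]
  nlinarith

/-- The quadratic (from the triple-root conditions) `h²σ² − (4+ah)hσ + 2(1+ah) = 0`
has solutions `σ = (4+ah ± √(8+a²h²))/(2h)`, and the minus-branch
`σ* = (4+ah − √(8+a²h²))/(2h)` is positive. -/
theorem stmt_0 (a h : ℝ) (ha : 0 ≤ a) (hh : 0 < h) :
    (∀ σ ∈ ({(4 + a*h + Real.sqrt (8 + a^2*h^2)) / (2*h),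
              (4 + a*h - Real.sqrt (8 + a^2*h^2)) / (2*h)} : Set ℝ),
      h^2*σ^2 - (4 + a*h)*h*σ + 2*(1 + a*h) = 0) ∧
    0 < (4 + a*h - Real.sqrt (8 + a^2*h^2)) / (2*h) := by
  refine ⟨fun σ hσ => (tripleRoot_quadratic_eq_zero_iff hh.ne' σ).mpr hσ, ?_⟩
  have hlt : √(8 + a ^ 2 * h ^ 2) < 4 + a * h := by
    rw [← mul_pow]
    exact sqrt_eight_add_sq_lt (by linarith [mul_nonneg ha hh.le])
  exact div_pos (sub_pos.mpr hlt) (by positivity)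
end

section
/- If a ≥ 0, b > 0, h > 0 and σ ≥ a/2, then k_p = (σh(a−σ) − (a−2σ))/(b e^{hσ}) ≥ 0 and k_i = σ²(h(a−σ)+1)/(b e^{hσ}) ≥ 0, provided additionally σ ≤ σ* = (4 + ah − √(8+a²h²))/(2h). -/
/-!
With `t = h σ - a h / 2`, one has `h (σ h (a - σ) - (a - 2σ)) = t (2 - t) + (a h)² / 4` and
`h (a - σ) + 1 = a h / 2 + 1 - t`. The lower bound `σ ≥ a / 2` is `t ≥ 0`, and since
`√(8 + a² h²) ≥ 2` the upper bound `σ ≤ σ*` gives `t ≤ 1`; both numerators are then nonnegative.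
-/

lemma mul_le_half_add_one_of_le_sigmaStar {a h σ : ℝ} (hh : 0 < h)
    (hσ : σ ≤ (4 + a*h - Real.sqrt (8 + a^2*h^2)) / (2*h)) :
    h * σ ≤ a * h / 2 + 1 := by
  have hsqrt : 2 ≤ Real.sqrt (8 + a^2*h^2) :=
    Real.le_sqrt_of_sq_le (by nlinarith [sq_nonneg (a*h)])
  have := (le_div_iff₀ (by positivity : (0:ℝ) < 2*h)).mp hσ
  linarith

lemma kp_numerator_nonneg {a h σ : ℝ} (hh : 0 < h) (hσ1 : a / 2 ≤ σ)
    (hσ2 : h * σ ≤ a * h / 2 + 2) :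
    0 ≤ σ*h*(a - σ) - (a - 2*σ) := by
  have ht0 : 0 ≤ h * σ - a * h / 2 := by nlinarith [mul_le_mul_of_nonneg_left hσ1 hh.le]
  have key : h * (σ*h*(a - σ) - (a - 2*σ))
      = (h * σ - a * h / 2) * (2 - (h * σ - a * h / 2)) + (a*h)^2 / 4 := by ring
  refine nonneg_of_mul_nonneg_right ?_ hh
  rw [key]
  exact add_nonneg (mul_nonneg ht0 (by linarith)) (by positivity)

lemma ki_numerator_nonneg {a h σ : ℝ} (ha : 0 ≤ a) (hh : 0 ≤ h)
    (hσ : h * σ ≤ a * h / 2 + 1) :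
    0 ≤ σ^2*(h*(a - σ) + 1) := by
  have : 0 ≤ a * h := mul_nonneg ha hh
  have : 0 ≤ h*(a - σ) + 1 := by linarith
  positivity

/-- Nonnegativity of the minimal PI gains for `a/2 ≤ σ ≤ σ*`. -/
theorem stmt_3 (a b h σ : ℝ) (ha : 0 ≤ a) (hb : 0 < b) (hh : 0 < h)
    (hσ1 : a / 2 ≤ σ)
    (hσ2 : σ ≤ (4 + a*h - Real.sqrt (8 + a^2*h^2)) / (2*h)) :
    0 ≤ (σ*h*(a - σ) - (a - 2*σ)) / (b*Real.exp (h*σ)) ∧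
    0 ≤ σ^2*(h*(a - σ) + 1) / (b*Real.exp (h*σ)) := by
  have hσ := mul_le_half_add_one_of_le_sigmaStar hh hσ2
  have hden : 0 ≤ b * Real.exp (h*σ) := by positivity
  exact ⟨div_nonneg (kp_numerator_nonneg hh hσ1 (by linarith)) hden,
    div_nonneg (ki_numerator_nonneg ha hh.le hσ) hden⟩
end

section
/- The equation 2(1 + e^η) + η(1 − e^η) = 0 has a unique positive real solution η_sup, and η_sup ∈ (2.39, 2.41). -/
/-!
Up to sign the equation reads `f η = 0` with `f η = e^η (η - 2) - (η + 2)`. On `(-2, 2]` both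
terms of `f` are negative, so every positive root exceeds `2`; on `[2, ∞)` the function `f` is
strictly increasing, since `e^y (y - 2) - e^x (x - 2) ≥ e^x (y - x) > y - x` for `2 ≤ x < y`.
Hence there is at most one positive root, and the sign change `f 2.39 < 0 < f 2.41`, obtained
from the decimal bounds on `e` through `e^239` and `e^241`, locates it.
-/

open Real Set

noncomputable def etaSupFn (x : ℝ) : ℝ := exp x * (x - 2) - (x + 2)

lemma etaSupFn_eq_zero_iff (η : ℝ) :
    2 * (1 + exp η) + η * (1 - exp η) = 0 ↔ etaSupFn η = 0 := by
  rw [← neg_eq_zero, etaSupFn]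
  ring_nf

lemma continuous_etaSupFn : Continuous etaSupFn := by
  unfold etaSupFn
  fun_prop

lemma etaSupFn_neg_of_le_two {x : ℝ} (hx : -2 < x) (hx2 : x ≤ 2) : etaSupFn x < 0 := by
  have : exp x * (x - 2) ≤ 0 := mul_nonpos_of_nonneg_of_nonpos (exp_pos x).le (by linarith)
  unfold etaSupFn
  linarith

lemma etaSupFn_strictMonoOn : StrictMonoOn etaSupFn (Ici 2) := by
  intro x (hx : 2 ≤ x) y (hy : 2 ≤ y) hxy
  have hexp : exp x * (y - 2) ≤ exp y * (y - 2) :=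
    mul_le_mul_of_nonneg_right (exp_le_exp.mpr hxy.le) (by linarith)
  have hgap : 0 < (exp x - 1) * (y - x) :=
    mul_pos (by linarith [add_one_lt_exp (by linarith : x ≠ 0)]) (by linarith)
  unfold etaSupFn
  nlinarith

lemma exp_239_div_100_lt : exp 2.39 < 11.25 := by
  have hpow : exp 2.39 ^ 100 = exp 1 ^ 239 := by
    rw [← exp_nat_mul, ← exp_nat_mul]
    norm_num
  have he : exp 1 ^ 239 < 2.7182818286 ^ 239 :=
    pow_lt_pow_left₀ exp_one_lt_d9 (exp_pos 1).le (by norm_num)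
  have hnum : (2.7182818286 : ℝ) ^ 239 < 11.25 ^ 100 := by norm_num
  exact lt_of_pow_lt_pow_left₀ 100 (by norm_num) (by linarith)

lemma exp_241_div_100_gt : 10.76 < exp 2.41 := by
  have hpow : exp 2.41 ^ 100 = exp 1 ^ 241 := by
    rw [← exp_nat_mul, ← exp_nat_mul]
    norm_num
  have he : (2.7182818283 : ℝ) ^ 241 < exp 1 ^ 241 :=
    pow_lt_pow_left₀ exp_one_gt_d9 (by norm_num) (by norm_num)
  have hnum : (10.76 : ℝ) ^ 100 < 2.7182818283 ^ 241 := by norm_num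
  exact lt_of_pow_lt_pow_left₀ 100 (exp_pos _).le (by linarith)

lemma etaSupFn_239_div_100_neg : etaSupFn 2.39 < 0 := by
  have := exp_239_div_100_lt
  unfold etaSupFn
  linarith

lemma etaSupFn_241_div_100_pos : 0 < etaSupFn 2.41 := by
  have := exp_241_div_100_gt
  unfold etaSupFn
  linarith

lemma exists_etaSupFn_eq_zero : ∃ η ∈ Icc (2.39 : ℝ) 2.41, etaSupFn η = 0 :=
  intermediate_value_Icc (by norm_num) continuous_etaSupFn.continuousOn
    ⟨etaSupFn_239_div_100_neg.le, etaSupFn_241_div_100_pos.le⟩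

lemma two_lt_of_etaSupFn_eq_zero {η : ℝ} (hη : 0 < η) (h : etaSupFn η = 0) : 2 < η := by
  by_contra! hle
  exact (etaSupFn_neg_of_le_two (by linarith) hle).ne h

lemma mem_Ioo_of_etaSupFn_eq_zero {η : ℝ} (hη : 0 < η) (h : etaSupFn η = 0) :
    η ∈ Ioo 2.39 2.41 := by
  have h2 : η ∈ Ici (2 : ℝ) := (two_lt_of_etaSupFn_eq_zero hη h).le
  constructor
  · exact (etaSupFn_strictMonoOn.lt_iff_lt (by norm_num) h2).mp
      (h ▸ etaSupFn_239_div_100_neg)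
  · exact (etaSupFn_strictMonoOn.lt_iff_lt h2 (by norm_num)).mp
      (h ▸ etaSupFn_241_div_100_pos)

/-- The equation `2(1+e^η) + η(1−e^η) = 0` has a unique positive solution
`η_sup`, and `η_sup ∈ (2.39, 2.41)`. -/
theorem stmt_8 :
    (∃! η : ℝ, 0 < η ∧ 2*(1 + Real.exp η) + η*(1 - Real.exp η) = 0) ∧
    ∀ η : ℝ, 0 < η → 2*(1 + Real.exp η) + η*(1 - Real.exp η) = 0 →
      2.39 < η ∧ η < 2.41 := by
  simp only [etaSupFn_eq_zero_iff]
  obtain ⟨η₀, ⟨h39, -⟩, hη₀⟩ := exists_etaSupFn_eq_zero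
  have hη₀pos : 0 < η₀ := by linarith
  refine ⟨⟨η₀, ⟨hη₀pos, hη₀⟩, fun η ⟨hη, h⟩ => ?_⟩, fun _ => mem_Ioo_of_etaSupFn_eq_zero⟩
  exact etaSupFn_strictMonoOn.injOn (two_lt_of_etaSupFn_eq_zero hη h).le
    (two_lt_of_etaSupFn_eq_zero hη₀pos hη₀).le (h.trans hη₀.symm)
end

section
/- Let η_sup be the unique positive root of 2(1+e^η) + η(1−e^η) = 0 and define ζ_min = (1+e^{η_sup})²/(2η_sup e^{η_sup} − (1+e^{η_sup})(1−e^{η_sup})). Then ζ_min > 0 and ζ_min < 1. -/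
/-! With `E = e^η`, the defining equation says `η (E - 1) = 2 (1 + E)`, and substituting this
into the denominator turns it into `(1 + E)³ / (E - 1)`. Hence `ζ_min = (E - 1) / (E + 1)`,
i.e. `ζ_min = tanh (η_sup / 2)`, which lies in `(0, 1)` because `E > 1`. -/

theorem denom_mul_sub_one_of_root {η E : ℝ} (hroot : 2 * (1 + E) + η * (1 - E) = 0) :
    (2 * η * E - (1 + E) * (1 - E)) * (E - 1) = (1 + E) ^ 3 := by
  linear_combination (-2 * E) * hroot

theorem sq_div_denom_of_root {η E : ℝ} (hE : 1 < E) (hroot : 2 * (1 + E) + η * (1 - E) = 0) :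
    (1 + E) ^ 2 / (2 * η * E - (1 + E) * (1 - E)) = (E - 1) / (E + 1) := by
  have hden := denom_mul_sub_one_of_root hroot
  have hden_ne : 2 * η * E - (1 + E) * (1 - E) ≠ 0 := by
    rintro h
    rw [h, zero_mul] at hden
    have : 0 < (1 + E) ^ 3 := pow_pos (by linarith) 3
    linarith
  rw [div_eq_div_iff hden_ne (by linarith)]
  linear_combination -hden

/-- With `η_sup` the unique positive root of `2(1+e^η) + η(1−e^η) = 0`,
`ζ_min = (1+e^{η_sup})²/(2η_sup e^{η_sup} − (1+e^{η_sup})(1−e^{η_sup}))`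
satisfies `0 < ζ_min < 1`. -/
theorem stmt_10 (ηs : ℝ) (hη : 0 < ηs)
    (hroot : 2*(1 + Real.exp ηs) + ηs*(1 - Real.exp ηs) = 0) :
    0 < (1 + Real.exp ηs)^2 /
        (2*ηs*Real.exp ηs - (1 + Real.exp ηs)*(1 - Real.exp ηs)) ∧
    (1 + Real.exp ηs)^2 /
        (2*ηs*Real.exp ηs - (1 + Real.exp ηs)*(1 - Real.exp ηs)) < 1 := by
  have hE : 1 < Real.exp ηs := Real.one_lt_exp_iff.mpr hη
  rw [sq_div_denom_of_root hE hroot]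
  exact ⟨div_pos (by linarith) (by linarith), (div_lt_one (by linarith)).mpr (by linarith)⟩
end

section
/- Define ζ(η) = (1+e^η)²/(2ηe^η − (1+e^η)(1−e^η)) for η > 0. Then ζ attains its minimum over (0, ∞) exactly at η = η_sup, where η_sup is the unique positive solution of 2(1+e^η) + η(1−e^η) = 0. -/
/-!
Write `ζ = 1 / g` with `g(η) = invZeta η = (2ηe^η + e^{2η} - 1) / (1 + e^η)²`, which is positive for `η > 0`.
A direct computation gives `g'(η) = 2e^η p(η) / (1 + e^η)³` with
`p(η) = critFun η = 2(1 + e^η) + η(1 - e^η)`. Since `p''(η) = -ηe^η`, `p` is strictly concave on `[0, ∞)`,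
and as `p(0) = 4 > 0` it is positive before its positive root `η_sup` and negative after it.
Hence `g` increases strictly up to `η_sup` and decreases strictly afterwards, so `η_sup` is the
unique maximiser of `g`, i.e. the unique minimiser of `ζ`.
-/

open Real Set

lemma StrictConcaveOn.pos_of_mem_Ioo {s : Set ℝ} {f : ℝ → ℝ} (hf : StrictConcaveOn ℝ s f)
    {a b x : ℝ} (ha : a ∈ s) (hb : b ∈ s) (hfa : 0 ≤ f a) (hfb : 0 ≤ f b) (hx : x ∈ Ioo a b) :
    0 < f x :=
  (le_min hfa hfb).trans_lt
    (hf.lt_on_openSegment ha hb (hx.1.trans hx.2).ne (Ioo_subset_openSegment hx))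

lemma StrictConcaveOn.neg_of_lt {s : Set ℝ} {f : ℝ → ℝ} (hf : StrictConcaveOn ℝ s f)
    {a b x : ℝ} (ha : a ∈ s) (hx : x ∈ s) (hfa : 0 < f a) (hfb : f b ≤ 0) (hab : a < b)
    (hbx : b < x) : f x < 0 := by
  have hmin := hf.lt_on_openSegment ha hx (hab.trans hbx).ne
    (Ioo_subset_openSegment (x := a) ⟨hab, hbx⟩)
  by_contra! h
  exact (le_min hfa.le h).not_gt (hmin.trans_le hfb)

noncomputable def critFun (x : ℝ) : ℝ := 2 * (1 + exp x) + x * (1 - exp x)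

noncomputable def invZeta (x : ℝ) : ℝ :=
  (2 * x * exp x - (1 + exp x) * (1 - exp x)) / (1 + exp x) ^ 2

lemma hasDerivAt_critFun (x : ℝ) : HasDerivAt critFun (1 + exp x - x * exp x) x := by
  have h := (((hasDerivAt_exp x).const_add 1).const_mul 2).add
    ((hasDerivAt_id x).mul ((hasDerivAt_exp x).const_sub 1))
  exact h.congr_deriv (by simp only [id]; ring)

lemma deriv_critFun : deriv critFun = fun x ↦ 1 + exp x - x * exp x :=
  funext fun x ↦ (hasDerivAt_critFun x).deriv

lemma hasDerivAt_deriv_critFun (x : ℝ) :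
    HasDerivAt (deriv critFun) (-(x * exp x)) x := by
  rw [deriv_critFun]
  have h := ((hasDerivAt_exp x).const_add 1).sub ((hasDerivAt_id x).mul (hasDerivAt_exp x))
  exact h.congr_deriv (by simp only [id]; ring)

lemma strictConcaveOn_critFun : StrictConcaveOn ℝ (Ici 0) critFun := by
  refine strictConcaveOn_of_deriv2_neg (convex_Ici 0)
    (fun x _ ↦ (hasDerivAt_critFun x).continuousAt.continuousWithinAt) fun x hx ↦ ?_
  rw [interior_Ici, mem_Ioi] at hx
  rw [Function.iterate_succ_apply, Function.iterate_one, (hasDerivAt_deriv_critFun x).deriv]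
  exact neg_neg_of_pos (mul_pos hx (exp_pos x))

lemma critFun_zero : critFun 0 = 4 := by norm_num [critFun]

lemma critFun_pos_of_lt {ηs x : ℝ} (hηs : 0 < ηs) (hroot : critFun ηs = 0) (hx : 0 < x)
    (hxs : x < ηs) : 0 < critFun x :=
  strictConcaveOn_critFun.pos_of_mem_Ioo self_mem_Ici hηs.le (by norm_num [critFun_zero])
    hroot.ge ⟨hx, hxs⟩

lemma critFun_neg_of_gt {ηs x : ℝ} (hηs : 0 < ηs) (hroot : critFun ηs = 0) (hxs : ηs < x) :
    critFun x < 0 :=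
  strictConcaveOn_critFun.neg_of_lt self_mem_Ici (hηs.trans hxs).le
    (by norm_num [critFun_zero]) hroot.le hηs hxs

lemma hasDerivAt_invZeta (x : ℝ) :
    HasDerivAt invZeta (2 * exp x * critFun x / (1 + exp x) ^ 3) x := by
  have he := hasDerivAt_exp x
  have hnum := (((hasDerivAt_id x).const_mul 2).mul he).sub
    ((he.const_add 1).mul (he.const_sub 1))
  have hden := (he.const_add 1).pow 2
  have hpos : (0 : ℝ) < 1 + exp x := by positivity
  refine (hnum.div hden (pow_ne_zero 2 hpos.ne')).congr_deriv ?_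
  simp only [id, critFun, Pi.sub_apply, Pi.mul_apply, Pi.pow_apply]
  field_simp
  ring

lemma strictMonoOn_invZeta {ηs : ℝ} (hηs : 0 < ηs) (hroot : critFun ηs = 0) :
    StrictMonoOn invZeta (Icc 0 ηs) := by
  refine strictMonoOn_of_deriv_pos (convex_Icc 0 ηs)
    (fun x _ ↦ (hasDerivAt_invZeta x).continuousAt.continuousWithinAt) fun x hx ↦ ?_
  rw [interior_Icc] at hx
  rw [(hasDerivAt_invZeta x).deriv]
  have := critFun_pos_of_lt hηs hroot hx.1 hx.2
  positivity

lemma strictAntiOn_invZeta {ηs : ℝ} (hηs : 0 < ηs) (hroot : critFun ηs = 0) :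
    StrictAntiOn invZeta (Ici ηs) := by
  refine strictAntiOn_of_deriv_neg (convex_Ici ηs)
    (fun x _ ↦ (hasDerivAt_invZeta x).continuousAt.continuousWithinAt) fun x hx ↦ ?_
  rw [interior_Ici] at hx
  rw [(hasDerivAt_invZeta x).deriv]
  have hneg := critFun_neg_of_gt hηs hroot hx
  exact div_neg_of_neg_of_pos (mul_neg_of_pos_of_neg (by positivity) hneg) (by positivity)

lemma invZeta_lt_of_ne {ηs x : ℝ} (hηs : 0 < ηs) (hroot : critFun ηs = 0) (hx : 0 < x)
    (hne : x ≠ ηs) : invZeta x < invZeta ηs := by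
  rcases hne.lt_or_gt with h | h
  · exact strictMonoOn_invZeta hηs hroot ⟨hx.le, h.le⟩ ⟨hηs.le, le_rfl⟩ h
  · exact strictAntiOn_invZeta hηs hroot self_mem_Ici h.le h

lemma invZeta_pos {x : ℝ} (hx : 0 < x) : 0 < invZeta x := by
  have hnum : 0 < 2 * x * exp x - (1 + exp x) * (1 - exp x) := by
    nlinarith [exp_pos x, add_one_lt_exp hx.ne']
  unfold invZeta
  positivity

/-- `ζ(η) = (1+e^η)²/(2ηe^η − (1+e^η)(1−e^η))` attains its minimum over
`(0,∞)` exactly at `η = η_sup`. -/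
theorem stmt_11 (ηs : ℝ) (hη : 0 < ηs)
    (hroot : 2*(1 + Real.exp ηs) + ηs*(1 - Real.exp ηs) = 0) :
    (∀ η : ℝ, 0 < η →
      (1 + Real.exp ηs)^2 /
          (2*ηs*Real.exp ηs - (1 + Real.exp ηs)*(1 - Real.exp ηs)) ≤
      (1 + Real.exp η)^2 /
          (2*η*Real.exp η - (1 + Real.exp η)*(1 - Real.exp η))) ∧
    (∀ η : ℝ, 0 < η →
      (1 + Real.exp η)^2 /
          (2*η*Real.exp η - (1 + Real.exp η)*(1 - Real.exp η)) =
      (1 + Real.exp ηs)^2 /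
          (2*ηs*Real.exp ηs - (1 + Real.exp ηs)*(1 - Real.exp ηs)) →
      η = ηs) := by
  have hζ (x : ℝ) : (1 + exp x) ^ 2 / (2 * x * exp x - (1 + exp x) * (1 - exp x)) =
      (invZeta x)⁻¹ := (inv_div _ _).symm
  simp only [hζ]
  refine ⟨fun η hη' ↦ ?_, fun η hη' heq ↦ ?_⟩
  · rcases eq_or_ne η ηs with rfl | hne
    · exact le_rfl
    · exact inv_anti₀ (invZeta_pos hη') (invZeta_lt_of_ne hη hroot hη' hne).le
  · by_contra hne
    exact (invZeta_lt_of_ne hη hroot hη' hne).ne (inv_injective heq)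
end

section
/- For fixed ζ > 0, the equation m_ζ(η) = (1+e^η)(ζ(1−e^η) + 1+e^η) − 2ζηe^η = 0 has a solution η > 0 if and only if ζ ≥ ζ_min, where ζ_min = (1+e^{η_sup})²/(2η_sup e^{η_sup} − (1+e^{η_sup})(1−e^{η_sup})) and η_sup is the unique positive root of 2(1+e^η)+η(1−e^η) = 0. -/
/-!
Write `m_ζ(η) = N(η) - ζ D(η)` with `N = (1+e^η)²` and `D = 2ηe^η - (1+e^η)(1-e^η)`, both
positive for `η > 0`. So `η > 0` is a root iff `φ(η) = 1/ζ` for `φ = D/N`. One computes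
`φ'(η) = 2e^η c(η)/(1+e^η)³` with `c(η) = 2(1+e^η) + η(1-e^η)`, and
`c(η)/(e^η-1) = 2coth(η/2) - η` is strictly decreasing, so `c` changes sign exactly once, at
`η_sup`. Hence `φ` increases from `φ(0) = 0` to its maximum `φ(η_sup)` and then decreases: by
the intermediate value theorem, `1/ζ > 0` is a value of `φ` on `(0, ∞)` iff `1/ζ ≤ φ(η_sup)`,
i.e. iff `ζ ≥ ζ_min`.
-/

open Real Set

namespace ImpedanceCollapse

noncomputable def num (η : ℝ) : ℝ := (1 + exp η) ^ 2

noncomputable def den (η : ℝ) : ℝ := 2 * η * exp η - (1 + exp η) * (1 - exp η)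

noncomputable def phi (η : ℝ) : ℝ := den η / num η

noncomputable def crit (η : ℝ) : ℝ := 2 * (1 + exp η) + η * (1 - exp η)

lemma num_pos (η : ℝ) : 0 < num η := by
  unfold num; positivity

lemma den_pos {η : ℝ} (hη : 0 < η) : 0 < den η := by
  have h1 : 1 < exp η := one_lt_exp_iff.mpr hη
  have := exp_pos η
  unfold den; nlinarith

lemma phi_zero : phi 0 = 0 := by
  simp [phi, den]

lemma hasDerivAt_phi (η : ℝ) :
    HasDerivAt phi (2 * exp η * crit η / (1 + exp η) ^ 3) η := by
  have hE := hasDerivAt_exp η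
  have hA : HasDerivAt (fun x => 1 + exp x) (exp η) η := hE.const_add 1
  have hD : HasDerivAt den
      (2 * (1 * exp η + η * exp η) - (exp η * (1 - exp η) + (1 + exp η) * -exp η)) η := by
    have h₁ : HasDerivAt (fun x => 2 * x * exp x) (2 * (1 * exp η + η * exp η)) η := by
      simpa [mul_assoc] using ((hasDerivAt_id η).mul hE).const_mul 2
    exact h₁.sub (hA.mul (hE.const_sub 1))
  have hN : HasDerivAt num (2 * (1 + exp η) * exp η) η :=
    (hA.pow 2).congr_deriv (by norm_num)
  refine (hD.div hN (num_pos η).ne').congr_deriv ?_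
  have : 1 + exp η ≠ 0 := by positivity
  unfold num den crit
  field_simp
  ring

lemma differentiable_phi : Differentiable ℝ phi :=
  fun η => (hasDerivAt_phi η).differentiableAt

/-- Strict decrease of `c(η)/(e^η - 1)` on `[0, ∞)`, cleared of denominators. -/
lemma crit_mul_lt_crit_mul {a b : ℝ} (ha : 0 ≤ a) (hab : a < b) :
    crit b * (exp a - 1) < crit a * (exp b - 1) := by
  have hexp : exp a < exp b := exp_lt_exp.mpr hab
  have hprod : 0 ≤ (exp a - 1) * (exp b - 1) :=
    mul_nonneg (sub_nonneg.mpr (one_le_exp ha)) (sub_nonneg.mpr (one_le_exp (ha.trans hab.le)))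
  have key : crit a * (exp b - 1) - crit b * (exp a - 1)
      = 4 * (exp b - exp a) + (b - a) * ((exp a - 1) * (exp b - 1)) := by
    unfold crit; ring
  rw [← sub_pos, key]
  have := mul_nonneg (sub_nonneg.mpr hab.le) hprod
  linarith

section Root

variable {ηs : ℝ}

lemma crit_pos_of_lt (hroot : crit ηs = 0) {η : ℝ} (hη : 0 < η) (hlt : η < ηs) :
    0 < crit η := by
  have h := crit_mul_lt_crit_mul hη.le hlt
  rw [hroot, zero_mul] at h
  exact pos_of_mul_pos_left h (sub_pos.mpr (one_lt_exp_iff.mpr (hη.trans hlt))).le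

lemma crit_neg_of_gt (hηs : 0 < ηs) (hroot : crit ηs = 0) {η : ℝ} (hlt : ηs < η) :
    crit η < 0 := by
  have h := crit_mul_lt_crit_mul hηs.le hlt
  rw [hroot, zero_mul] at h
  exact neg_of_mul_neg_left h (sub_pos.mpr (one_lt_exp_iff.mpr hηs)).le

lemma strictMonoOn_phi (hroot : crit ηs = 0) : StrictMonoOn phi (Icc 0 ηs) := by
  refine strictMonoOn_of_deriv_pos (convex_Icc 0 ηs)
    differentiable_phi.continuous.continuousOn ?_
  intro η hη
  rw [interior_Icc] at hη
  rw [(hasDerivAt_phi η).deriv]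
  have := crit_pos_of_lt hroot hη.1 hη.2
  positivity

lemma strictAntiOn_phi (hηs : 0 < ηs) (hroot : crit ηs = 0) :
    StrictAntiOn phi (Ici ηs) := by
  refine strictAntiOn_of_deriv_neg (convex_Ici ηs)
    differentiable_phi.continuous.continuousOn ?_
  intro η hη
  rw [interior_Ici] at hη
  rw [(hasDerivAt_phi η).deriv]
  have := crit_neg_of_gt hηs hroot hη
  exact div_neg_of_neg_of_pos (mul_neg_of_pos_of_neg (by positivity) this) (by positivity)

lemma phi_le_phi_root (hηs : 0 < ηs) (hroot : crit ηs = 0) {η : ℝ} (hη : 0 ≤ η) :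
    phi η ≤ phi ηs := by
  rcases le_or_gt η ηs with hle | hlt
  · exact (strictMonoOn_phi hroot).monotoneOn ⟨hη, hle⟩ ⟨hη.trans hle, le_rfl⟩ hle
  · exact (strictAntiOn_phi hηs hroot).antitoneOn self_mem_Ici (mem_Ici.mpr hlt.le) hlt.le

end Root

lemma collapse_eq_zero_iff {ζ η : ℝ} (hη : 0 < η) :
    (1 + exp η) * (ζ * (1 - exp η) + 1 + exp η) - 2 * ζ * η * exp η = 0 ↔
      phi η = ζ⁻¹ := by
  have hden := (den_pos hη).ne'
  have hnum := (num_pos η).ne'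
  have hm : (1 + exp η) * (ζ * (1 - exp η) + 1 + exp η) - 2 * ζ * η * exp η
      = num η - ζ * den η := by
    unfold num den; ring
  rw [hm, sub_eq_zero, phi]
  constructor
  · intro h
    rw [h, div_mul_cancel_right₀ hden]
  · intro h
    rw [← inv_inv ζ, ← h, inv_div, div_mul_cancel₀ _ hden]

end ImpedanceCollapse

open ImpedanceCollapse in
/-- For fixed `ζ > 0`, `m_ζ(η) = (1+e^η)(ζ(1−e^η) + 1+e^η) − 2ζηe^η = 0`
has a positive solution iff `ζ ≥ ζ_min`. -/
theorem stmt_12 (ζ : ℝ) (hζ : 0 < ζ) (ηs : ℝ) (hη : 0 < ηs)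
    (hroot : 2*(1 + Real.exp ηs) + ηs*(1 - Real.exp ηs) = 0) :
    (∃ η : ℝ, 0 < η ∧
        (1 + Real.exp η)*(ζ*(1 - Real.exp η) + 1 + Real.exp η)
          - 2*ζ*η*Real.exp η = 0)
      ↔ (1 + Real.exp ηs)^2 /
          (2*ηs*Real.exp ηs - (1 + Real.exp ηs)*(1 - Real.exp ηs)) ≤ ζ := by
  have hphi : 0 < phi ηs := div_pos (den_pos hη) (num_pos ηs)
  have hζ_min : (1 + exp ηs) ^ 2 / (2 * ηs * exp ηs - (1 + exp ηs) * (1 - exp ηs))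
      = (phi ηs)⁻¹ :=
    (inv_div _ _).symm
  rw [hζ_min, inv_le_comm₀ hphi hζ]
  constructor
  · rintro ⟨η, hη0, hm⟩
    rw [collapse_eq_zero_iff hη0] at hm
    exact hm ▸ phi_le_phi_root hη hroot hη0.le
  · intro hle
    obtain ⟨η, hηmem, hφ⟩ := intermediate_value_Icc hη.le
      differentiable_phi.continuous.continuousOn ⟨phi_zero.symm ▸ (inv_pos.mpr hζ).le, hle⟩
    have hη0 : 0 < η := hηmem.1.lt_of_ne (by
      rintro rfl
      exact (inv_pos.mpr hζ).ne (phi_zero ▸ hφ))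
    exact ⟨η, hη0, (collapse_eq_zero_iff hη0).mpr hφ⟩
end
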